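/- arXiv:1604.00338 — 4 statements merged into one kernel-verified Lean document; each statement's English description precedes it below -/
import Mathlib

section
/- Let 𝓘 and 𝓚 be homogeneous families (multisets) of corteges for m,n, and let α : 𝓘 → ℤ and β : 𝓚 → ℤ. Define the reversal of a cortege S = (I|J, I'|J') to be S^rev := (I'|J', I|J), and let 𝓘^rev and 𝓚^rev be the families of reversed corteges of 𝓘 and 𝓚, with the functions −α and −β transferred along the reversal. If (𝓘, 𝓚, α, β) is q-balanced, then (𝓘^rev, 𝓚^rev, −α, −β) is q-balanced. -/
/-- A cortege `(I|J, I'|J')` for `m,n`. -/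
structure Cortege (m n : ℕ) where
  I : Finset ℕ
  J : Finset ℕ
  I' : Finset ℕ
  J' : Finset ℕ
  hIm : I ⊆ Finset.Icc 1 m
  hI'm : I' ⊆ Finset.Icc 1 m
  hJn : J ⊆ Finset.Icc 1 n
  hJ'n : J' ⊆ Finset.Icc 1 n
  hIJ : I.card = J.card
  hI'J' : I'.card = J'.card

/-- Elements of the ground set `Y^r ⊔ Y^c`: `Sum.inl i` is a row index, `Sum.inr j`
a column index. -/
abbrev Elt := ℕ ⊕ ℕ

/-- The linear order on `Y^r ⊔ Y^c`: rows in increasing order first, then columns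
in decreasing order. -/
def cLT : Elt → Elt → Prop
  | Sum.inl i, Sum.inl i' => i < i'
  | Sum.inl _, Sum.inr _ => True
  | Sum.inr _, Sum.inl _ => False
  | Sum.inr j, Sum.inr j' => j' < j

instance : DecidableRel cLT := fun a b =>
  match a, b with
  | Sum.inl i, Sum.inl i' => inferInstanceAs (Decidable (i < i'))
  | Sum.inl _, Sum.inr _ => inferInstanceAs (Decidable True)
  | Sum.inr _, Sum.inl _ => inferInstanceAs (Decidable False)
  | Sum.inr j, Sum.inr j' => inferInstanceAs (Decidable (j' < j))

/-- Two elements lie on the same side (both rows or both columns). -/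
abbrev sameSide (a b : Elt) : Prop := a.isLeft = b.isLeft

/-- The underlying numerical index of an element. -/
abbrev eVal : Elt → ℕ := Sum.elim id id

/-- The numerically smaller member of a couple (used for couples lying in one side). -/
def numMin (p : Elt × Elt) : Elt := if eVal p.1 ≤ eVal p.2 then p.1 else p.2

namespace Cortege
variable {m n : ℕ}

/-- White elements of the refinement: `I° = I - I'` (rows) and `J° = J - J'` (columns). -/
def whites (S : Cortege m n) : Finset Elt :=
  (S.I \ S.I').image Sum.inl ∪ (S.J \ S.J').image Sum.inr

/-- Black elements of the refinement: `I• = I' - I` (rows) and `J• = J' - J` (columns). -/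
def blacks (S : Cortege m n) : Finset Elt :=
  (S.I' \ S.I).image Sum.inl ∪ (S.J' \ S.J).image Sum.inr

/-- The ground set `Y^r ⊔ Y^c` of a cortege. -/
def ground (S : Cortege m n) : Finset Elt := S.whites ∪ S.blacks

end Cortege

/-- `M` is a feasible matching for the cortege `S`.  Couples are stored as pairs
`(a, b)` with `a` preceding `b` in the linear order `cLT`. -/
def IsFeasible {m n : ℕ} (S : Cortege m n) (M : Finset (Elt × Elt)) : Prop :=
  (∀ p ∈ M, p.1 ∈ S.ground ∧ p.2 ∈ S.ground ∧ cLT p.1 p.2) ∧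
  (∀ y ∈ S.ground, ∃! p, p ∈ M ∧ (p.1 = y ∨ p.2 = y)) ∧
  (∀ p ∈ M, (sameSide p.1 p.2 → (p.1 ∈ S.whites ↔ p.2 ∈ S.blacks)) ∧
            (¬ sameSide p.1 p.2 → (p.1 ∈ S.whites ↔ p.2 ∈ S.whites))) ∧
  (∀ p ∈ M, ∀ p' ∈ M, ¬ (cLT p.1 p'.1 ∧ cLT p'.1 p.2 ∧ cLT p.2 p'.2))

/-- The set of elements covered by a set of couples. -/
def coveredBy (Φ : Finset (Elt × Elt)) : Finset Elt :=
  Φ.image Prod.fst ∪ Φ.image Prod.snd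

/-- `T` is obtained from `S` by the index exchange operation using the couples `Φ`:
the intersections and unions of the row (resp. column) sets are unchanged, and
the white/black color is flipped exactly on the elements covered by `Φ`. -/
def IsExchange {m n : ℕ} (S T : Cortege m n) (Φ : Finset (Elt × Elt)) : Prop :=
  S.I ∩ S.I' = T.I ∩ T.I' ∧ S.J ∩ S.J' = T.J ∩ T.J' ∧
  S.I ∪ S.I' = T.I ∪ T.I' ∧ S.J ∪ S.J' = T.J ∪ T.J' ∧
  ∀ a ∈ S.ground,
    (a ∈ coveredBy Φ → (a ∈ S.whites ↔ a ∈ T.blacks)) ∧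
    (a ∉ coveredBy Φ → (a ∈ S.whites ↔ a ∈ T.whites))

/-- The couples of `M` on which the white/black colorings of `S` and `T` differ. -/
def differSet {m n : ℕ} (S T : Cortege m n) (M : Finset (Elt × Elt)) :
    Finset (Elt × Elt) :=
  M.filter (fun p =>
    ¬ (p.1 ∈ S.whites ↔ p.1 ∈ T.whites) ∨ ¬ (p.2 ∈ S.whites ↔ p.2 ∈ T.whites))

/-- `ζ°(S;Φ)`: the number of couples of `Φ` lying within one side whose numerically
smaller element is white. -/
def zetaWhite {m n : ℕ} (S : Cortege m n) (Φ : Finset (Elt × Elt)) : ℕ :=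
  (Φ.filter (fun p => sameSide p.1 p.2 ∧ numMin p ∈ S.whites)).card

/-- `ζ•(S;Φ)`: the number of couples of `Φ` lying within one side whose numerically
smaller element is black. -/
def zetaBlack {m n : ℕ} (S : Cortege m n) (Φ : Finset (Elt × Elt)) : ℕ :=
  (Φ.filter (fun p => sameSide p.1 p.2 ∧ numMin p ∈ S.blacks)).card

/-- Configurations for an (indexed) family of corteges: pairs of a member of the family
and a feasible matching for it. -/
def Config {m n : ℕ} {ι : Type} (F : ι → Cortege m n) : Type :=
  {p : ι × Finset (Elt × Elt) // IsFeasible (F p.1) p.2}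

/-- The quadruple `(F, G, α, β)` is `q`-balanced. -/
def QBalanced {m n : ℕ} {ι κ : Type} (F : ι → Cortege m n) (G : κ → Cortege m n)
    (α : ι → ℤ) (β : κ → ℤ) : Prop :=
  ∃ γ : Config F ≃ Config G, ∀ c : Config F,
    ((γ c).1.2 = c.1.2) ∧
    IsExchange (F c.1.1) (G (γ c).1.1) (differSet (F c.1.1) (G (γ c).1.1) c.1.2) ∧
    β (γ c).1.1 - α c.1.1 =
      (zetaWhite (F c.1.1) (differSet (F c.1.1) (G (γ c).1.1) c.1.2) : ℤ) -
      (zetaBlack (F c.1.1) (differSet (F c.1.1) (G (γ c).1.1) c.1.2) : ℤ)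

/-- The two families `F`, `G` are (jointly) homogeneous. -/
def Homogeneous {m n : ℕ} {ι κ : Type} (F : ι → Cortege m n) (G : κ → Cortege m n) : Prop :=
  ∀ S T : Cortege m n,
    ((∃ i, F i = S) ∨ (∃ k, G k = S)) → ((∃ i, F i = T) ∨ (∃ k, G k = T)) →
    S.I ∪ S.I' = T.I ∪ T.I' ∧ S.I ∩ S.I' = T.I ∩ T.I' ∧
    S.J ∪ S.J' = T.J ∪ T.J' ∧ S.J ∩ S.J' = T.J ∩ T.J'

/-- The cortege reversed to `S`. -/
def Cortege.rev {m n : ℕ} (S : Cortege m n) : Cortege m n :=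
  ⟨S.I', S.J', S.I, S.J, S.hI'm, S.hIm, S.hJ'n, S.hJn, S.hI'J', S.hIJ⟩

open scoped symmDiff

/-
Reversal swaps the white and black elements of a cortege and keeps its ground set, on which
white and black are complementary. So every feasible matching stays feasible, and since an
exchange between `S` and `T` preserves the ground set, it flips the colours on the same couples
for `S.rev` and `T.rev`. Hence `γ`, transported along reversal, still works; white and black
trading places interchanges `ζ°` and `ζ•`, which is compensated by negating `α` and `β`.
-/
namespace Cortege
variable {m n : ℕ}

lemma whites_rev (S : Cortege m n) : S.rev.whites = S.blacks := rfl

lemma blacks_rev (S : Cortege m n) : S.rev.blacks = S.whites := rfl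

lemma ground_rev (S : Cortege m n) : S.rev.ground = S.ground := Finset.union_comm _ _

lemma disjoint_whites_blacks (S : Cortege m n) : Disjoint S.whites S.blacks := by
  rw [Finset.disjoint_left]
  rintro (i | j) <;> simp +contextual [whites, blacks]

lemma mem_blacks_iff_not_mem_whites {S : Cortege m n} {a : Elt} (ha : a ∈ S.ground) :
    a ∈ S.blacks ↔ a ∉ S.whites :=
  ⟨fun hb hw => Finset.disjoint_left.mp S.disjoint_whites_blacks hw hb,
    fun hw => (Finset.mem_union.mp ha).resolve_left hw⟩

lemma ground_eq_image_symmDiff (S : Cortege m n) :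
    S.ground = (S.I ∆ S.I').image Sum.inl ∪ (S.J ∆ S.J').image Sum.inr := by
  simp only [ground, whites, blacks, symmDiff_def, Finset.sup_eq_union, Finset.image_union]
  ac_rfl

/-- The ground set depends only on the unions and intersections, which an exchange preserves. -/
lemma ground_eq_of_isExchange {S T : Cortege m n} {Φ : Finset (Elt × Elt)}
    (h : IsExchange S T Φ) : S.ground = T.ground := by
  obtain ⟨hI, hJ, hI', hJ', -⟩ := h
  simp only [ground_eq_image_symmDiff, symmDiff_eq_sup_sdiff_inf, Finset.sup_eq_union,
    Finset.inf_eq_inter, hI, hJ, hI', hJ']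

end Cortege

section Reversal

open Cortege

variable {m n : ℕ}

lemma isFeasible_rev {S : Cortege m n} {M : Finset (Elt × Elt)} (h : IsFeasible S M) :
    IsFeasible S.rev M := by
  obtain ⟨hground, hcover, hcolor, hplanar⟩ := h
  refine ⟨by simpa only [ground_rev] using hground, by simpa only [ground_rev] using hcover,
    fun p hp => ?_, hplanar⟩
  obtain ⟨hp₁, hp₂, -⟩ := hground p hp
  rw [whites_rev, blacks_rev, mem_blacks_iff_not_mem_whites hp₁,
    mem_blacks_iff_not_mem_whites hp₂]
  have := hcolor p hp
  rw [mem_blacks_iff_not_mem_whites hp₂] at this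
  tauto

lemma isFeasible_rev_iff {S : Cortege m n} {M : Finset (Elt × Elt)} :
    IsFeasible S.rev M ↔ IsFeasible S M :=
  ⟨isFeasible_rev (S := S.rev), isFeasible_rev⟩

def configRevEquiv {ι : Type} (F : ι → Cortege m n) : Config (fun i => (F i).rev) ≃ Config F :=
  Equiv.subtypeEquivRight fun _ => isFeasible_rev_iff

lemma differSet_rev {S T : Cortege m n} {M : Finset (Elt × Elt)} (hM : IsFeasible S M)
    (hST : S.ground = T.ground) : differSet S.rev T.rev M = differSet S T M := by
  refine Finset.filter_congr fun p hp => ?_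
  obtain ⟨hp₁, hp₂, -⟩ := hM.1 p hp
  rw [whites_rev, whites_rev, mem_blacks_iff_not_mem_whites hp₁,
    mem_blacks_iff_not_mem_whites hp₂, mem_blacks_iff_not_mem_whites (hST ▸ hp₁),
    mem_blacks_iff_not_mem_whites (hST ▸ hp₂), not_iff_not, not_iff_not]

lemma isExchange_rev {S T : Cortege m n} {Φ : Finset (Elt × Elt)} (h : IsExchange S T Φ) :
    IsExchange S.rev T.rev Φ := by
  have hST := ground_eq_of_isExchange h
  obtain ⟨hI, hJ, hI', hJ', hcolor⟩ := h
  refine ⟨?_, ?_, ?_, ?_, fun a ha => ?_⟩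
  · simpa only [rev, Finset.inter_comm] using hI
  · simpa only [rev, Finset.inter_comm] using hJ
  · simpa only [rev, Finset.union_comm] using hI'
  · simpa only [rev, Finset.union_comm] using hJ'
  rw [ground_rev] at ha
  have := hcolor a ha
  rw [whites_rev, blacks_rev, whites_rev, mem_blacks_iff_not_mem_whites ha,
    mem_blacks_iff_not_mem_whites (hST ▸ ha)]
  rw [mem_blacks_iff_not_mem_whites (hST ▸ ha)] at this
  tauto

lemma zetaWhite_rev (S : Cortege m n) (Φ : Finset (Elt × Elt)) :
    zetaWhite S.rev Φ = zetaBlack S Φ := rfl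

lemma zetaBlack_rev (S : Cortege m n) (Φ : Finset (Elt × Elt)) :
    zetaBlack S.rev Φ = zetaWhite S Φ := rfl

lemma exchange_conditions_rev {S T : Cortege m n} {M : Finset (Elt × Elt)} {a b : ℤ}
    (hM : IsFeasible S M) (hex : IsExchange S T (differSet S T M))
    (hval : b - a = (zetaWhite S (differSet S T M) : ℤ) - zetaBlack S (differSet S T M)) :
    IsExchange S.rev T.rev (differSet S.rev T.rev M) ∧
      -b - -a = (zetaWhite S.rev (differSet S.rev T.rev M) : ℤ) -
        zetaBlack S.rev (differSet S.rev T.rev M) := by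
  rw [differSet_rev hM (ground_eq_of_isExchange hex), zetaWhite_rev, zetaBlack_rev]
  exact ⟨isExchange_rev hex, by linarith⟩

end Reversal

theorem qBalanced_rev_general
    {m n : ℕ} {ι κ : Type} (F : ι → Cortege m n) (G : κ → Cortege m n)
    (α : ι → ℤ) (β : κ → ℤ)
    (hbal : QBalanced F G α β) :
    QBalanced (fun i => (F i).rev) (fun k => (G k).rev)
      (fun i => -(α i)) (fun k => -(β k)) := by
  obtain ⟨γ, hγ⟩ := hbal
  refine ⟨(configRevEquiv F).trans (γ.trans (configRevEquiv G).symm), fun c => ?_⟩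
  obtain ⟨hM, hex, hval⟩ := hγ (configRevEquiv F c)
  exact ⟨hM, exchange_conditions_rev (configRevEquiv F c).2 hex hval⟩

/-- Reversing all corteges and negating `α, β` preserves `q`-balancedness. -/
theorem qBalanced_rev
    {m n : ℕ} {ι κ : Type} (F : ι → Cortege m n) (G : κ → Cortege m n)
    (hhom : Homogeneous F G) (α : ι → ℤ) (β : κ → ℤ)
    (hbal : QBalanced F G α β) :
    QBalanced (fun i => (F i).rev) (fun k => (G k).rev)
      (fun i => -(α i)) (fun k => -(β k)) :=
  qBalanced_rev_general F G α β hbal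
end

section
/- Let 𝓘 and 𝓚 be homogeneous families (multisets) of corteges for m,n, and let α : 𝓘 → ℤ and β : 𝓚 → ℤ. Define the transpose of a cortege S = (I|J, I'|J') (for m,n) to be S^⊤ := (J|I, J'|I'), which is a cortege for n,m, and let 𝓘^⊤ and 𝓚^⊤ be the families of transposed corteges, with α and β transferred along the transposition. If (𝓘, 𝓚, α, β) is q-balanced, then (𝓘^⊤, 𝓚^⊤, α, β) is q-balanced. -/
/-- The cortege transposed to `S`. -/
def Cortege.transpose {m n : ℕ} (S : Cortege m n) : Cortege n m :=
  ⟨S.J, S.I, S.J', S.I', S.hJn, S.hJ'n, S.hIm, S.hI'm, S.hIJ.symm, S.hI'J'.symm⟩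


/-!
Exchanging the roles of rows and columns reverses the linear order on `Y^r ⊔ Y^c`, so a
couple `(a, b)` becomes `(bᵀ, aᵀ)`. This carries feasible matchings of `S` bijectively onto
feasible matchings of `Sᵀ` (colours, sides and planarity are respected), commutes with the index
exchange, and keeps the numerically smaller member of a one-sided couple together with its
colour, so `ζ°` and `ζ•` do not change. Conjugating the bijection `γ` by this transposition of
configurations balances the transposed families.
-/

/-- Transposition of a couple: both members change side, which reverses their order in `cLT`,
so the pair is also flipped. -/
def coupleTranspose : Elt × Elt ≃ Elt × Elt :=
  (Equiv.prodComm Elt Elt).trans ((Equiv.sumComm ℕ ℕ).prodCongr (Equiv.sumComm ℕ ℕ))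

@[simp]
lemma coupleTranspose_apply (p : Elt × Elt) : coupleTranspose p = (p.2.swap, p.1.swap) := rfl

@[simp]
lemma coupleTranspose_symm : coupleTranspose.symm = coupleTranspose := rfl

def transposeCouples (M : Finset (Elt × Elt)) : Finset (Elt × Elt) :=
  M.map coupleTranspose.toEmbedding

@[simp]
lemma mem_transposeCouples {M : Finset (Elt × Elt)} {p : Elt × Elt} :
    p ∈ transposeCouples M ↔ coupleTranspose p ∈ M := by
  simp only [transposeCouples, Finset.mem_map_equiv, coupleTranspose_symm]

@[simp]
lemma transposeCouples_transposeCouples (M : Finset (Elt × Elt)) :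
    transposeCouples (transposeCouples M) = M := by
  ext p; simp

lemma Sum.swap_eq_iff_eq_swap {α β : Type*} {a : α ⊕ β} {b : β ⊕ α} :
    a.swap = b ↔ a = b.swap := by
  constructor <;> rintro rfl <;> simp

@[simp]
lemma cLT_swap {a b : Elt} : cLT a.swap b.swap ↔ cLT b a := by
  cases a <;> cases b <;> simp [cLT]

@[simp]
lemma sameSide_swap {a b : Elt} : sameSide a.swap b.swap ↔ sameSide b a := by
  cases a <;> cases b <;> simp [sameSide]

lemma numMin_coupleTranspose {p : Elt × Elt} (hs : sameSide p.1 p.2) (hlt : cLT p.1 p.2) :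
    numMin (coupleTranspose p) = (numMin p).swap := by
  obtain ⟨a | a, b | b⟩ := p <;> simp_all [numMin, cLT, sameSide, le_of_lt, not_le_of_gt]

namespace Cortege

variable {m n : ℕ} {S : Cortege m n} {a : Elt}

@[simp]
lemma mem_whites_transpose : a ∈ S.transpose.whites ↔ a.swap ∈ S.whites := by
  cases a <;> simp [whites, transpose]

@[simp]
lemma mem_blacks_transpose : a ∈ S.transpose.blacks ↔ a.swap ∈ S.blacks := by
  cases a <;> simp [blacks, transpose]

@[simp]
lemma mem_ground_transpose : a ∈ S.transpose.ground ↔ a.swap ∈ S.ground := by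
  simp [ground]

lemma mem_blacks_iff_notMem_whites (ha : a ∈ S.ground) : a ∈ S.blacks ↔ a ∉ S.whites := by
  cases a <;> simp_all [ground, whites, blacks] <;> tauto

end Cortege

section Transpose

variable {m n : ℕ}

lemma IsFeasible.transpose {S : Cortege m n} {M : Finset (Elt × Elt)} (h : IsFeasible S M) :
    IsFeasible S.transpose (transposeCouples M) := by
  obtain ⟨hmem, hcover, hcolor, hplanar⟩ := h
  refine ⟨fun p hp => ?_, fun y hy => ?_, fun p hp => ?_, fun p hp p' hp' => ?_⟩
  · obtain ⟨q, hq, rfl⟩ := Finset.mem_map.mp hp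
    obtain ⟨h₁, h₂, hlt⟩ := hmem q hq
    simpa using ⟨h₂, h₁, hlt⟩
  · rw [Cortege.mem_ground_transpose] at hy
    refine (coupleTranspose.existsUnique_congr fun q => ?_).mp (hcover _ hy)
    simp [Sum.swap_eq_iff_eq_swap, or_comm]
  · obtain ⟨q, hq, rfl⟩ := Finset.mem_map.mp hp
    obtain ⟨h₁, h₂, -⟩ := hmem q hq
    have hq := hcolor q hq
    rw [Cortege.mem_blacks_iff_notMem_whites h₂] at hq
    simp only [Equiv.coe_toEmbedding, coupleTranspose_apply, sameSide_swap,
      Cortege.mem_whites_transpose, Cortege.mem_blacks_transpose, Sum.swap_swap,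
      Cortege.mem_blacks_iff_notMem_whites h₁]
    tauto
  · obtain ⟨q, hq, rfl⟩ := Finset.mem_map.mp hp
    obtain ⟨q', hq', rfl⟩ := Finset.mem_map.mp hp'
    simp only [Equiv.coe_toEmbedding, coupleTranspose_apply, cLT_swap]
    exact fun ⟨h₁, h₂, h₃⟩ => hplanar q' hq' q hq ⟨h₃, h₂, h₁⟩

lemma differSet_transpose (S T : Cortege m n) (M : Finset (Elt × Elt)) :
    differSet S.transpose T.transpose (transposeCouples M) =
      transposeCouples (differSet S T M) := by
  ext p
  simp only [differSet, Finset.mem_filter, mem_transposeCouples, coupleTranspose_apply,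
    Cortege.mem_whites_transpose]
  tauto

lemma mem_coveredBy_transposeCouples {Φ : Finset (Elt × Elt)} {a : Elt} :
    a ∈ coveredBy (transposeCouples Φ) ↔ a.swap ∈ coveredBy Φ := by
  simp only [coveredBy, Finset.mem_union, Finset.mem_image, mem_transposeCouples]
  constructor
  · rintro (⟨p, hp, rfl⟩ | ⟨p, hp, rfl⟩)
    · exact Or.inr ⟨_, hp, rfl⟩
    · exact Or.inl ⟨_, hp, rfl⟩
  · rintro (⟨p, hp, h⟩ | ⟨p, hp, h⟩)
    · exact Or.inr ⟨coupleTranspose p, by simpa using hp, by simp [h]⟩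
    · exact Or.inl ⟨coupleTranspose p, by simpa using hp, by simp [h]⟩

lemma IsExchange.transpose {S T : Cortege m n} {Φ : Finset (Elt × Elt)}
    (h : IsExchange S T Φ) : IsExchange S.transpose T.transpose (transposeCouples Φ) := by
  obtain ⟨hI, hJ, hI', hJ', hcolor⟩ := h
  refine ⟨hJ, hI, hJ', hI', fun a ha => ?_⟩
  rw [Cortege.mem_ground_transpose] at ha
  simpa [mem_coveredBy_transposeCouples] using hcolor _ ha

lemma card_filter_numMin_transposeCouples {Φ : Finset (Elt × Elt)}
    (hΦ : ∀ p ∈ Φ, cLT p.1 p.2) {X Y : Finset Elt} (hXY : ∀ a, a ∈ Y ↔ a.swap ∈ X) :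
    ((transposeCouples Φ).filter (fun p => sameSide p.1 p.2 ∧ numMin p ∈ Y)).card =
      (Φ.filter (fun p => sameSide p.1 p.2 ∧ numMin p ∈ X)).card := by
  rw [transposeCouples, Finset.filter_map, Finset.card_map]
  refine congrArg Finset.card (Finset.filter_congr fun p hp => ?_)
  have hside : sameSide (coupleTranspose p).1 (coupleTranspose p).2 ↔ sameSide p.1 p.2 :=
    sameSide_swap
  simp only [Function.comp_apply, Equiv.coe_toEmbedding, hside]
  exact and_congr_right fun hs => by
    rw [numMin_coupleTranspose hs (hΦ p hp), hXY, Sum.swap_swap]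

lemma zetaWhite_transpose {S : Cortege m n} {Φ : Finset (Elt × Elt)}
    (hΦ : ∀ p ∈ Φ, cLT p.1 p.2) : zetaWhite S.transpose (transposeCouples Φ) = zetaWhite S Φ :=
  card_filter_numMin_transposeCouples hΦ fun _ => Cortege.mem_whites_transpose

lemma zetaBlack_transpose {S : Cortege m n} {Φ : Finset (Elt × Elt)}
    (hΦ : ∀ p ∈ Φ, cLT p.1 p.2) : zetaBlack S.transpose (transposeCouples Φ) = zetaBlack S Φ :=
  card_filter_numMin_transposeCouples hΦ fun _ => Cortege.mem_blacks_transpose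

def Config.transposeEquiv {ι : Type} (F : ι → Cortege m n) :
    Config F ≃ Config (fun i => (F i).transpose) where
  toFun c := ⟨(c.1.1, transposeCouples c.1.2), c.2.transpose⟩
  invFun c := ⟨(c.1.1, transposeCouples c.1.2), c.2.transpose⟩
  left_inv c := Subtype.ext (by simp)
  right_inv c := Subtype.ext (by simp)

@[simp]
lemma Config.transposeEquiv_val {ι : Type} (F : ι → Cortege m n) (c : Config F) :
    (Config.transposeEquiv F c).1 = (c.1.1, transposeCouples c.1.2) := rfl

end Transpose

theorem qBalanced_transpose_general
    {m n : ℕ} {ι κ : Type} (F : ι → Cortege m n) (G : κ → Cortege m n)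
    (α : ι → ℤ) (β : κ → ℤ)
    (hbal : QBalanced F G α β) :
    QBalanced (fun i => (F i).transpose) (fun k => (G k).transpose) α β := by
  obtain ⟨γ, hγ⟩ := hbal
  refine ⟨(Config.transposeEquiv F).symm.trans (γ.trans (Config.transposeEquiv G)), ?_⟩
  intro c
  obtain ⟨c, rfl⟩ := (Config.transposeEquiv F).surjective c
  obtain ⟨hM, hex, hζ⟩ := hγ c
  have hlt : ∀ p ∈ differSet (F c.1.1) (G (γ c).1.1) c.1.2, cLT p.1 p.2 := fun p hp =>
    (c.2.1 p (Finset.mem_filter.mp hp).1).2.2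
  simp only [Equiv.trans_apply, Equiv.symm_apply_apply, Config.transposeEquiv_val,
    hM, differSet_transpose, zetaWhite_transpose hlt, zetaBlack_transpose hlt, true_and]
  exact ⟨hex.transpose, hζ⟩

/-- Transposing all corteges preserves `q`-balancedness. -/
theorem qBalanced_transpose
    {m n : ℕ} {ι κ : Type} (F : ι → Cortege m n) (G : κ → Cortege m n)
    (hhom : Homogeneous F G) (α : ι → ℤ) (β : κ → ℤ)
    (hbal : QBalanced F G α β) :
    QBalanced (fun i => (F i).transpose) (fun k => (G k).transpose) α β :=
  qBalanced_transpose_general F G α β hbal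
end

section
/- Let (I|J, I'|J') be a cortege for m,n whose refinement (I°, I•, J°, J•) is not (∅,∅,∅,∅). Then there exists a feasible matching for this cortege. -/
/-!
Call white rows and black columns positive and the other elements of `Y^r ⊔ Y^c` negative.
Condition (i) on a couple says exactly that its two ends have opposite signs, and
`|I| = |J|`, `|I'| = |J'|` give `|I°| + |J•| = |I•| + |J°|`, so there are as many positive as
negative elements. A finite totally ordered set with equally many elements of two colours always
has a noncrossing perfect matching into bicoloured couples: some two neighbours have different
colours; couple them and match the rest recursively. As nothing lies between the two
neighbours, their couple crosses no other.
-/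

open Finset

section NoncrossingMatching

variable {α : Type*} (r : α → α → Prop) (f : α → Bool)

structure IsNoncrossingMatching (s : Finset α) (M : Finset (α × α)) : Prop where
  fst_mem : ∀ p ∈ M, p.1 ∈ s
  snd_mem : ∀ p ∈ M, p.2 ∈ s
  rel : ∀ p ∈ M, r p.1 p.2
  color_ne : ∀ p ∈ M, f p.1 ≠ f p.2
  existsUnique : ∀ y ∈ s, ∃! p, p ∈ M ∧ (p.1 = y ∨ p.2 = y)
  noncrossing : ∀ p ∈ M, ∀ q ∈ M, ¬ (r p.1 q.1 ∧ r q.1 p.2 ∧ r p.2 q.2)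

variable {r f}

lemma isNoncrossingMatching_empty : IsNoncrossingMatching r f ∅ ∅ := by
  constructor <;> simp

lemma exists_color_ne_of_card_filter_eq {s : Finset α}
    (hs : #(s.filter (f · = true)) = #(s.filter (f · = false))) (hne : s.Nonempty) :
    ∃ x ∈ s, ∃ y ∈ s, f x ≠ f y := by
  by_contra! hconst
  obtain ⟨a, ha⟩ := hne
  have hall : ∀ b ∈ s, f b = f a := fun b hb => hconst b hb a ha
  have hcard : #s = 0 := by
    cases hfa : f a
    · rwa [filter_false_of_mem (by simp_all), filter_true_of_mem (by simp_all), eq_comm] at hs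
    · rwa [filter_true_of_mem (by simp_all), filter_false_of_mem (by simp_all)] at hs
  exact card_ne_zero_of_mem ha hcard

/- Among the pairs `r a b` of differently colored elements, one with the fewest elements of `s`
strictly between them has none. -/
lemma exists_adjacent_color_ne [IsStrictTotalOrder α r] {s : Finset α} {x y : α}
    (hx : x ∈ s) (hy : y ∈ s) (hxy : f x ≠ f y) :
    ∃ a ∈ s, ∃ b ∈ s, r a b ∧ f a ≠ f b ∧ ∀ z ∈ s, ¬ (r a z ∧ r z b) := by
  classical
  let P := (s ×ˢ s).filter (fun p => r p.1 p.2 ∧ f p.1 ≠ f p.2)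
  let between (p : α × α) : Finset α := s.filter (fun z => r p.1 z ∧ r z p.2)
  have hP : P.Nonempty := by
    rcases trichotomous_of r x y with h | rfl | h
    · exact ⟨(x, y), by simp [P, hx, hy, h, hxy]⟩
    · exact absurd rfl hxy
    · exact ⟨(y, x), by simp [P, hx, hy, h, hxy.symm]⟩
  obtain ⟨⟨a, b⟩, hab, hmin⟩ := P.exists_min_image (fun p => #(between p)) hP
  simp only [P, mem_filter, mem_product] at hab
  obtain ⟨⟨ha, hb⟩, hrab, hfab⟩ := hab
  refine ⟨a, ha, b, hb, hrab, hfab, fun z hzs ⟨haz, hzb⟩ => ?_⟩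
  have hz : z ∈ between (a, b) := by simp [between, hzs, haz, hzb]
  have hz_irrefl : ¬ r z z := irrefl_of r z
  by_cases hfaz : f a = f z
  · have hsub : between (z, b) ⊂ between (a, b) :=
      (ssubset_iff_of_subset fun w hw => by
        simp only [between, mem_filter] at hw ⊢
        exact ⟨hw.1, trans_of r haz hw.2.1, hw.2.2⟩).2 ⟨z, hz, by simp [between, hz_irrefl]⟩
    have := hmin (z, b) (by simp [P, hzs, hb, hzb, ← hfaz, hfab])
    exact (card_lt_card hsub).not_ge this
  · have hsub : between (a, z) ⊂ between (a, b) :=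
      (ssubset_iff_of_subset fun w hw => by
        simp only [between, mem_filter] at hw ⊢
        exact ⟨hw.1, hw.2.1, trans_of r hw.2.2 hzb⟩).2 ⟨z, hz, by simp [between, hz_irrefl]⟩
    have := hmin (a, z) (by simp [P, ha, hzs, haz, hfaz])
    exact (card_lt_card hsub).not_ge this

lemma card_filter_erase_erase_eq [DecidableEq α] {s : Finset α} {x y : α}
    (hx : x ∈ s) (hy : y ∈ s) (hxy : f x ≠ f y)
    (hs : #(s.filter (f · = true)) = #(s.filter (f · = false))) :
    #(((s.erase x).erase y).filter (f · = true)) =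
      #(((s.erase x).erase y).filter (f · = false)) := by
  have hyx : y ≠ x := fun h => hxy (h ▸ rfl)
  cases hfx : f x <;> cases hfy : f y <;> simp_all [filter_erase, card_erase_of_mem,
    erase_eq_of_notMem]

lemma IsNoncrossingMatching.insert_of_adjacent [DecidableEq α] [Std.Irrefl r]
    {s : Finset α} {M : Finset (α × α)} {x y : α}
    (hM : IsNoncrossingMatching r f ((s.erase x).erase y) M) (hx : x ∈ s) (hy : y ∈ s)
    (hxy : r x y) (hf : f x ≠ f y) (hadj : ∀ z ∈ s, ¬ (r x z ∧ r z y)) :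
    IsNoncrossingMatching r f s (insert (x, y) M) := by
  have mem_of_mem {z} (hz : z ∈ (s.erase x).erase y) : z ∈ s :=
    mem_of_mem_erase (mem_of_mem_erase hz)
  have ne_of_mem {z} (hz : z ∈ (s.erase x).erase y) : z ≠ x ∧ z ≠ y :=
    ⟨ne_of_mem_erase (mem_of_mem_erase hz), ne_of_mem_erase hz⟩
  refine ⟨?_, ?_, ?_, ?_, ?_, ?_⟩
  · simpa [hx] using fun p hp => mem_of_mem (hM.fst_mem p hp)
  · simpa [hy] using fun p hp => mem_of_mem (hM.snd_mem p hp)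
  · simpa [hxy] using hM.rel
  · simpa [hf] using hM.color_ne
  · intro z hz
    by_cases hzxy : z = x ∨ z = y
    · refine ⟨(x, y), ⟨mem_insert_self _ _, hzxy.imp Eq.symm Eq.symm⟩, ?_⟩
      rintro q ⟨hq, hqz⟩
      rcases mem_insert.mp hq with rfl | hq
      · rfl
      · rcases hqz with rfl | rfl
        · exact absurd hzxy (not_or.mpr (ne_of_mem (hM.fst_mem q hq)))
        · exact absurd hzxy (not_or.mpr (ne_of_mem (hM.snd_mem q hq)))
    · obtain ⟨hzx, hzy⟩ := not_or.mp hzxy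
      obtain ⟨p, ⟨hp, hpz⟩, huniq⟩ := hM.existsUnique z (by simp [hz, hzx, hzy])
      refine ⟨p, ⟨mem_insert_of_mem hp, hpz⟩, ?_⟩
      rintro q ⟨hq, hqz⟩
      rcases mem_insert.mp hq with rfl | hq
      · exact absurd (hqz.imp Eq.symm Eq.symm) hzxy
      · exact huniq q ⟨hq, hqz⟩
  · intro p hp q hq
    rcases mem_insert.mp hp with rfl | hp <;> rcases mem_insert.mp hq with rfl | hq
    · exact fun h => irrefl_of r _ h.1
    · exact fun h => hadj q.1 (mem_of_mem (hM.fst_mem q hq)) ⟨h.1, h.2.1⟩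
    · exact fun h => hadj p.2 (mem_of_mem (hM.snd_mem p hp)) ⟨h.2.1, h.2.2⟩
    · exact hM.noncrossing p hp q hq

theorem exists_isNoncrossingMatching [IsStrictTotalOrder α r] [DecidableEq α] (s : Finset α)
    (hs : #(s.filter (f · = true)) = #(s.filter (f · = false))) :
    ∃ M, IsNoncrossingMatching r f s M := by
  induction s using Finset.strongInduction with
  | H s ih =>
    rcases s.eq_empty_or_nonempty with rfl | hne
    · exact ⟨∅, isNoncrossingMatching_empty⟩
    obtain ⟨x₀, hx₀, y₀, hy₀, hf₀⟩ := exists_color_ne_of_card_filter_eq hs hne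
    obtain ⟨x, hx, y, hy, hxy, hf, hadj⟩ := exists_adjacent_color_ne (r := r) hx₀ hy₀ hf₀
    obtain ⟨M, hM⟩ := ih ((s.erase x).erase y)
      ((erase_subset _ _).trans_ssubset (erase_ssubset hx)) (card_filter_erase_erase_eq hx hy hf hs)
    exact ⟨_, hM.insert_of_adjacent hx hy hxy hf hadj⟩

end NoncrossingMatching

instance : IsStrictTotalOrder Elt cLT where
  trichotomous a b := by rcases a with a | a <;> rcases b with b | b <;> simp [cLT] <;> omega
  irrefl a := by rcases a with a | a <;> simp [cLT]
  trans a b c := by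
    rcases a with a | a <;> rcases b with b | b <;> rcases c with c | c <;> simp [cLT] <;> omega

namespace Cortege

variable {m n : ℕ} (S : Cortege m n)

@[simp] lemma inl_mem_whites {i : ℕ} : Sum.inl i ∈ S.whites ↔ i ∈ S.I \ S.I' := by
  simp [whites]

@[simp] lemma inr_mem_whites {j : ℕ} : Sum.inr j ∈ S.whites ↔ j ∈ S.J \ S.J' := by
  simp [whites]

@[simp] lemma inl_mem_blacks {i : ℕ} : Sum.inl i ∈ S.blacks ↔ i ∈ S.I' \ S.I := by
  simp [blacks]

@[simp] lemma inr_mem_blacks {j : ℕ} : Sum.inr j ∈ S.blacks ↔ j ∈ S.J' \ S.J := by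
  simp [blacks]

def sign (a : Elt) : Bool := decide (a ∈ S.whites ↔ a.isLeft)

lemma filter_sign_true :
    S.ground.filter (S.sign · = true) = (S.I \ S.I').disjSum (S.J' \ S.J) := by
  ext (i | j) <;> simp [sign, ground] <;> tauto

lemma filter_sign_false :
    S.ground.filter (S.sign · = false) = (S.I' \ S.I).disjSum (S.J \ S.J') := by
  ext (i | j) <;> simp [sign, ground] <;> tauto

lemma card_filter_sign_true_eq_card_filter_sign_false :
    #(S.ground.filter (S.sign · = true)) = #(S.ground.filter (S.sign · = false)) := by
  rw [filter_sign_true, filter_sign_false, card_disjSum, card_disjSum]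
  have hI := card_sdiff_add_card_inter S.I S.I'
  have hI' := card_sdiff_add_card_inter S.I' S.I
  have hJ := card_sdiff_add_card_inter S.J S.J'
  have hJ' := card_sdiff_add_card_inter S.J' S.J
  rw [inter_comm] at hI' hJ'
  have := S.hIJ
  have := S.hI'J'
  omega

lemma colors_of_sign_ne {a b : Elt} (ha : a ∈ S.ground) (hb : b ∈ S.ground)
    (hab : S.sign a ≠ S.sign b) :
    (sameSide a b → (a ∈ S.whites ↔ b ∈ S.blacks)) ∧
      (¬ sameSide a b → (a ∈ S.whites ↔ b ∈ S.whites)) := by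
  rcases a with i | i <;> rcases b with j | j <;>
    simp only [sign, ground, sameSide, ne_eq, decide_eq_decide, mem_union, inl_mem_whites,
      inr_mem_whites, inl_mem_blacks, inr_mem_blacks, mem_sdiff, Sum.isLeft_inl, Sum.isLeft_inr,
      iff_true, iff_false, Bool.false_eq_true, not_true, not_false_eq_true] at * <;>
    tauto

end Cortege

theorem exists_feasible_matching_general
    {m n : ℕ} (S : Cortege m n) :
    ∃ M : Finset (Elt × Elt), IsFeasible S M := by
  obtain ⟨M, hM⟩ := exists_isNoncrossingMatching (r := cLT) S.ground
    S.card_filter_sign_true_eq_card_filter_sign_false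
  refine ⟨M, fun p hp => ⟨hM.fst_mem p hp, hM.snd_mem p hp, hM.rel p hp⟩, hM.existsUnique,
    fun p hp => ?_, hM.noncrossing⟩
  exact S.colors_of_sign_ne (hM.fst_mem p hp) (hM.snd_mem p hp) (hM.color_ne p hp)

/-- Any cortege with nonempty refinement admits a feasible matching. -/
theorem exists_feasible_matching
    {m n : ℕ} (S : Cortege m n)
    (h : ¬ (S.I \ S.I' = ∅ ∧ S.I' \ S.I = ∅ ∧ S.J \ S.J' = ∅ ∧ S.J' \ S.J = ∅)) :
    ∃ M : Finset (Elt × Elt), IsFeasible S M :=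
  exists_feasible_matching_general S
end

section
/- Let I, J ⊆ {1,…,n} with |I| ≥ |J|, suppose I and J are not weakly separated, and let m ≥ |I|. Let S be the cortege (A|I, B|J) for m,n, where A = {1,…,|I|} and B = {1,…,|J|}. Then there exist feasible matchings M and M' for S such that ζ°(S;M) − ζ•(S;M) ≠ ζ°(S;M') − ζ•(S;M'). -/
/-!
Recolour the rows (white rows become black, black rows white) and list `Y^r ⊔ Y^c` in the order
`cLT`. A feasible matching is then a noncrossing perfect matching in which every couple joins the
two new colours, and `ζ° - ζ•` differs by a constant from `arcZeta`, the number of couples with a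
white right end minus the number of couples with a black right end.

For the flag cortege, the failure of weak separation yields the patterns `w < b < w` and
`b < w < b` among the recoloured points. If three consecutive points are coloured `w b w` (or
`b w b`), match the middle one to its left or to its right neighbour and all other points in the
same way: `arcZeta` changes by `2`. Otherwise some adjacent pair `b w` or `w b` can be removed
without destroying either pattern, and induction applies.
-/

/-- `X < Y` elementwise: every element of `X` is smaller than every element of `Y`. -/
def finsetLT (X Y : Finset ℕ) : Prop := ∀ a ∈ X, ∀ b ∈ Y, a < b

/-- One-sided weak separation: `|I| ≥ |J|` and `J - I` has a partition `J₁ ∪ J₂`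
with `J₁ < I - J < J₂`. -/
def WShalf (I J : Finset ℕ) : Prop :=
  J.card ≤ I.card ∧ ∃ J₁ J₂ : Finset ℕ, Disjoint J₁ J₂ ∧ J₁ ∪ J₂ = J \ I ∧
    finsetLT J₁ (I \ J) ∧ finsetLT (I \ J) J₂

/-- `I` and `J` are weakly separated. -/
def WeaklySeparated (I J : Finset ℕ) : Prop := WShalf I J ∨ WShalf J I

/-- `Inv(A,B)`: the number of pairs `(a,b) ∈ A × B` with `a > b`. -/
def invPairs (A B : Finset ℕ) : ℕ := ((A ×ˢ B).filter (fun p => p.2 < p.1)).card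

/-- The flag cortege `(A|I, B|J)` with `A = {1,…,|I|}` and `B = {1,…,|J|}`. -/
def flagCortege (m n : ℕ) (I J : Finset ℕ)
    (hIn : I ⊆ Finset.Icc 1 n) (hJn : J ⊆ Finset.Icc 1 n)
    (hJI : J.card ≤ I.card) (hm : I.card ≤ m) : Cortege m n :=
  ⟨Finset.Icc 1 I.card, I, Finset.Icc 1 J.card, J,
    Finset.Icc_subset_Icc le_rfl hm,
    Finset.Icc_subset_Icc le_rfl (le_trans hJI hm),
    hIn, hJn, by simp, by simp⟩


open Finset

theorem Finset.exists_greatest_lt {α : Type*} [LinearOrder α] {s : Finset α} {x a : α}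
    (hx : x ∈ s) (hxa : x < a) : ∃ y ∈ s, y < a ∧ x ≤ y ∧ ∀ z ∈ s, z < a → z ≤ y := by
  obtain ⟨y, hy, hmax⟩ := (s.filter (· < a)).exists_max_image id ⟨x, mem_filter.2 ⟨hx, hxa⟩⟩
  obtain ⟨hys, hya⟩ := mem_filter.1 hy
  exact ⟨y, hys, hya, hmax x (mem_filter.2 ⟨hx, hxa⟩),
    fun z hz hza => hmax z (mem_filter.2 ⟨hz, hza⟩)⟩

theorem Finset.exists_least_gt {α : Type*} [LinearOrder α] {s : Finset α} {x a : α}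
    (hx : x ∈ s) (hax : a < x) : ∃ y ∈ s, a < y ∧ y ≤ x ∧ ∀ z ∈ s, a < z → y ≤ z :=
  Finset.exists_greatest_lt (α := αᵒᵈ) hx hax

theorem Finset.sum_fst_add_snd_eq_sum {γ R : Type*} [DecidableEq γ] [AddCommMonoid R]
    {G : Finset γ} {M : Finset (γ × γ)} (f : γ → R) (hmem : ∀ p ∈ M, p.1 ∈ G ∧ p.2 ∈ G ∧ p.1 ≠ p.2)
    (huniq : ∀ y ∈ G, ∃! p, p ∈ M ∧ (p.1 = y ∨ p.2 = y)) :
    ∑ p ∈ M, (f p.1 + f p.2) = ∑ y ∈ G, f y := by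
  have hcommon : ∀ p ∈ M, ∀ q ∈ M, ∀ y, (p.1 = y ∨ p.2 = y) → (q.1 = y ∨ q.2 = y) → p = q := by
    rintro p hp q hq y hpy hqy
    have hy : y ∈ G := by rcases hpy with rfl | rfl <;> simp [hmem p hp]
    exact (huniq y hy).unique ⟨hp, hpy⟩ ⟨hq, hqy⟩
  have hfst : Set.InjOn Prod.fst M := fun p hp q hq h =>
    hcommon p hp q hq _ (.inl rfl) (.inl h.symm)
  have hsnd : Set.InjOn Prod.snd M := fun p hp q hq h =>
    hcommon p hp q hq _ (.inr rfl) (.inr h.symm)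
  have hdisj : Disjoint (M.image Prod.fst) (M.image Prod.snd) := by
    simp only [disjoint_left, mem_image, not_exists, not_and]
    rintro _ ⟨p, hp, rfl⟩ q hq hqp
    obtain rfl := hcommon p hp q hq _ (.inl rfl) (.inr hqp)
    exact (hmem p hp).2.2 hqp.symm
  have hunion : M.image Prod.fst ∪ M.image Prod.snd = G := by
    ext y
    simp only [mem_union, mem_image]
    constructor
    · rintro (⟨p, hp, rfl⟩ | ⟨p, hp, rfl⟩) <;> simp [hmem p hp]
    · intro hy
      obtain ⟨p, ⟨hp, hpy⟩, -⟩ := huniq y hy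
      exact hpy.imp (⟨p, hp, ·⟩) (⟨p, hp, ·⟩)
  rw [sum_add_distrib, ← sum_image hfst, ← sum_image hsnd, ← sum_union hdisj, hunion]

section NoncrossingMatching

variable {α β : Type*}

structure IsNoncrossingMatching_s19 [LinearOrder α] (W B : Finset α) (M : Finset (α × α)) :
    Prop where
  lt : ∀ p ∈ M, p.1 < p.2
  bicolored : ∀ p ∈ M, (p.1 ∈ W ∧ p.2 ∈ B) ∨ (p.1 ∈ B ∧ p.2 ∈ W)
  covers : ∀ y ∈ W ∪ B, ∃ p ∈ M, p.1 = y ∨ p.2 = y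
  eq_of_common_end :
    ∀ p ∈ M, ∀ q ∈ M, ∀ y, (p.1 = y ∨ p.2 = y) → (q.1 = y ∨ q.2 = y) → p = q
  noncrossing : ∀ p ∈ M, ∀ q ∈ M, ¬(p.1 < q.1 ∧ q.1 < p.2 ∧ p.2 < q.2)

def arcZeta [DecidableEq α] (W : Finset α) (M : Finset (α × α)) : ℤ :=
  ∑ p ∈ M, if p.2 ∈ W then 1 else -1

def Surrounds [LT α] (W B : Finset α) : Prop :=
  ∃ w₁ ∈ W, ∃ b ∈ B, ∃ w₂ ∈ W, w₁ < b ∧ b < w₂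

def ArcZetaVaries [LinearOrder α] (W B : Finset α) : Prop :=
  ∃ M M', IsNoncrossingMatching_s19 W B M ∧ IsNoncrossingMatching_s19 W B M' ∧
    arcZeta W M ≠ arcZeta W M'

theorem arcZeta_map [DecidableEq α] [DecidableEq β] (e : α ↪ β) (W : Finset α)
    (M : Finset (α × α)) : arcZeta (W.map e) (M.map (e.prodMap e)) = arcZeta W M := by
  simp [arcZeta, sum_map]

theorem Surrounds.of_strictAnti [Preorder α] [Preorder β] {W B : Finset α}
    {W' B' : Finset β} {f : α → β} (hf : StrictAnti f) (hW : ∀ w ∈ W, f w ∈ W')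
    (hB : ∀ b ∈ B, f b ∈ B') : Surrounds W B → Surrounds W' B'
  | ⟨w₁, hw₁, b, hb, w₂, hw₂, h₁, h₂⟩ =>
    ⟨f w₂, hW w₂ hw₂, f b, hB b hb, f w₁, hW w₁ hw₁, hf h₂, hf h₁⟩

variable [LinearOrder α] {W B : Finset α} {M : Finset (α × α)}

namespace IsNoncrossingMatching_s19

theorem symm (h : IsNoncrossingMatching_s19 W B M) : IsNoncrossingMatching_s19 B W M where
  lt := h.lt
  bicolored p hp := (h.bicolored p hp).symm
  covers y hy := h.covers y (by rwa [union_comm])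
  eq_of_common_end := h.eq_of_common_end
  noncrossing := h.noncrossing

theorem endpoints_mem (h : IsNoncrossingMatching_s19 W B M) {p : α × α} (hp : p ∈ M) :
    p.1 ∈ W ∪ B ∧ p.2 ∈ W ∪ B := by
  rcases h.bicolored p hp with ⟨h₁, h₂⟩ | ⟨h₁, h₂⟩ <;> simp [h₁, h₂]

theorem ne_of_notMem (h : IsNoncrossingMatching_s19 W B M) {x : α} (hx : x ∉ W ∪ B) {p : α × α}
    (hp : p ∈ M) : p.1 ≠ x ∧ p.2 ≠ x :=
  ⟨fun h₁ => hx (h₁ ▸ (h.endpoints_mem hp).1), fun h₂ => hx (h₂ ▸ (h.endpoints_mem hp).2)⟩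

theorem arcZeta_symm (hd : Disjoint W B) (h : IsNoncrossingMatching_s19 W B M) :
    arcZeta B M = -arcZeta W M := by
  rw [arcZeta, arcZeta, ← sum_neg_distrib]
  refine sum_congr rfl fun p hp => ?_
  rcases h.bicolored p hp with ⟨-, h₂⟩ | ⟨-, h₂⟩
  · simp [h₂, disjoint_right.1 hd h₂]
  · simp [h₂, disjoint_left.1 hd h₂]

theorem insert_arc (h : IsNoncrossingMatching_s19 W B M) {u v : α} (huv : u < v) (hu : u ∉ W ∪ B)
    (hv : v ∉ W ∪ B) (hgap : ∀ z ∈ W ∪ B, ¬(u < z ∧ z < v)) :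
    IsNoncrossingMatching_s19 (insert u W) (insert v B) (insert (u, v) M) where
  lt := forall_mem_insert _ _ _ |>.2 ⟨huv, h.lt⟩
  bicolored := forall_mem_insert _ _ _ |>.2 ⟨by simp, fun p hp => by
    rcases h.bicolored p hp with ⟨h₁, h₂⟩ | ⟨h₁, h₂⟩ <;> simp [h₁, h₂]⟩
  covers y hy := by
    have : y = u ∨ y = v ∨ y ∈ W ∪ B := by
      simp only [mem_union, mem_insert] at hy ⊢; tauto
    rcases this with rfl | rfl | hy
    · exact ⟨(y, v), mem_insert_self _ _, Or.inl rfl⟩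
    · exact ⟨(u, y), mem_insert_self _ _, Or.inr rfl⟩
    · obtain ⟨p, hp, hpy⟩ := h.covers y hy
      exact ⟨p, mem_insert_of_mem hp, hpy⟩
  eq_of_common_end p hp q hq y hpy hqy := by
    rcases mem_insert.1 hp with rfl | hp <;> rcases mem_insert.1 hq with rfl | hq
    · rfl
    · have := h.ne_of_notMem hu hq; have := h.ne_of_notMem hv hq; grind
    · have := h.ne_of_notMem hu hp; have := h.ne_of_notMem hv hp; grind
    · exact h.eq_of_common_end p hp q hq y hpy hqy
  noncrossing p hp q hq := by
    rcases mem_insert.1 hp with rfl | hp <;> rcases mem_insert.1 hq with rfl | hq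
    · exact fun h => h.1.false
    · exact fun h' => hgap q.1 (h.endpoints_mem hq).1 ⟨h'.1, h'.2.1⟩
    · exact fun h' => hgap p.2 (h.endpoints_mem hp).2 ⟨h'.2.1, h'.2.2⟩
    · exact h.noncrossing p hp q hq

theorem insert_of_erase (hd : Disjoint W B) {w b u v : α} (hw : w ∈ W) (hb : b ∈ B)
    (huv : u < v) (hpair : (u = w ∧ v = b) ∨ (u = b ∧ v = w))
    (hgap : ∀ z ∈ W ∪ B, ¬(u < z ∧ z < v))
    (h : IsNoncrossingMatching_s19 (W.erase w) (B.erase b) M) :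
    IsNoncrossingMatching_s19 W B (insert (u, v) M) ∧
      arcZeta W (insert (u, v) M) = arcZeta (W.erase w) M + if v = w then 1 else -1 := by
  have hw' : w ∉ W.erase w ∪ B.erase b := by simp [disjoint_left.1 hd hw]
  have hb' : b ∉ W.erase w ∪ B.erase b := by simp [disjoint_right.1 hd hb]
  have hgap' : ∀ z ∈ W.erase w ∪ B.erase b, ¬(u < z ∧ z < v) := fun z hz =>
    hgap z (union_subset_union (erase_subset _ _) (erase_subset _ _) hz)
  have hnot : (u, v) ∉ M := fun hm => by
    rcases hpair with ⟨rfl, -⟩ | ⟨rfl, -⟩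
    · exact (h.ne_of_notMem hw' hm).1 rfl
    · exact (h.ne_of_notMem hb' hm).1 rfl
  refine ⟨?_, ?_⟩
  · rcases hpair with ⟨rfl, rfl⟩ | ⟨rfl, rfl⟩
    · simpa only [Finset.insert_erase hw, Finset.insert_erase hb] using
        h.insert_arc huv hw' hb' hgap'
    · simpa only [Finset.insert_erase hw, Finset.insert_erase hb] using
        (h.symm.insert_arc huv (by rwa [union_comm]) (by rwa [union_comm])
          (by rwa [union_comm])).symm
  · rw [arcZeta, sum_insert hnot, arcZeta, add_comm]
    congr 1
    · refine sum_congr rfl fun p hp => ?_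
      simp [(h.ne_of_notMem hw' hp).2]
    · rcases hpair with ⟨-, rfl⟩ | ⟨-, rfl⟩
      · simp only [disjoint_right.1 hd hb, if_false]
        rw [if_neg fun hvw : v = w => disjoint_right.1 hd hb (hvw ▸ hw)]
      · simp [hw]

theorem map [LinearOrder β] (e : α ↪ β) (he : StrictMonoOn e ↑(W ∪ B))
    (h : IsNoncrossingMatching_s19 W B M) :
    IsNoncrossingMatching_s19 (W.map e) (B.map e) (M.map (e.prodMap e)) := by
  have hlt : ∀ {x y}, x ∈ W ∪ B → y ∈ W ∪ B → (e x < e y ↔ x < y) := fun hx hy =>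
    he.lt_iff_lt (mem_coe.2 hx) (mem_coe.2 hy)
  refine ⟨?_, ?_, ?_, ?_, ?_⟩
  · simp only [forall_mem_map]
    intro p hp
    exact (hlt (h.endpoints_mem hp).1 (h.endpoints_mem hp).2).2 (h.lt p hp)
  · simp only [forall_mem_map]
    intro p hp
    rcases h.bicolored p hp with ⟨h₁, h₂⟩ | ⟨h₁, h₂⟩ <;> simp [h₁, h₂]
  · intro y hy
    obtain ⟨x, hx, rfl⟩ : ∃ x ∈ W ∪ B, e x = y := by
      simp only [mem_union, mem_map] at hy ⊢
      grind
    obtain ⟨p, hp, hpx⟩ := h.covers x hx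
    exact ⟨_, mem_map_of_mem _ hp, by simpa using hpx⟩
  · simp only [forall_mem_map]
    intro p hp q hq y hpy hqy
    simp only [Function.Embedding.coe_prodMap, Prod.map_fst, Prod.map_snd] at hpy hqy
    obtain ⟨z, hpz, hqz⟩ : ∃ z, (p.1 = z ∨ p.2 = z) ∧ (q.1 = z ∨ q.2 = z) := by
      rcases hpy with rfl | rfl
      · exact ⟨p.1, .inl rfl, hqy.imp (e.injective ·) (e.injective ·)⟩
      · exact ⟨p.2, .inr rfl, hqy.imp (e.injective ·) (e.injective ·)⟩
    rw [h.eq_of_common_end p hp q hq z hpz hqz]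
  · simp only [forall_mem_map]
    intro p hp q hq
    simp only [Function.Embedding.coe_prodMap, Prod.map_fst, Prod.map_snd]
    rw [hlt (h.endpoints_mem hp).1 (h.endpoints_mem hq).1,
      hlt (h.endpoints_mem hq).1 (h.endpoints_mem hp).2,
      hlt (h.endpoints_mem hp).2 (h.endpoints_mem hq).2]
    exact h.noncrossing p hp q hq

end IsNoncrossingMatching_s19

theorem ArcZetaVaries.symm (hd : Disjoint W B) : ArcZetaVaries W B → ArcZetaVaries B W
  | ⟨M, M', hM, hM', hne⟩ => ⟨M, M', hM.symm, hM'.symm, by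
      rw [hM.arcZeta_symm hd, hM'.arcZeta_symm hd]
      exact fun h => hne (neg_injective h)⟩

theorem ArcZetaVaries.of_erase (hd : Disjoint W B) {w b u v : α} (hw : w ∈ W) (hb : b ∈ B)
    (huv : u < v) (hpair : (u = w ∧ v = b) ∨ (u = b ∧ v = w))
    (hgap : ∀ z ∈ W ∪ B, ¬(u < z ∧ z < v)) :
    ArcZetaVaries (W.erase w) (B.erase b) → ArcZetaVaries W B
  | ⟨M, M', hM, hM', hne⟩ => by
    obtain ⟨h, e⟩ := hM.insert_of_erase hd hw hb huv hpair hgap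
    obtain ⟨h', e'⟩ := hM'.insert_of_erase hd hw hb huv hpair hgap
    exact ⟨_, _, h, h', by rw [e, e']; exact fun h => hne (add_right_cancel h)⟩

theorem exists_adjacent_of_lt {w b : α} (hw : w ∈ W) (hb : b ∈ B) (hwb : w < b) :
    ∃ w' ∈ W, ∃ b' ∈ B, w' < b' ∧ ∀ z ∈ W ∪ B, ¬(w' < z ∧ z < b') := by
  obtain ⟨b', hb', hwb', -, hb'min⟩ := exists_least_gt hb hwb
  obtain ⟨w', hw', hw'b', hww', hw'max⟩ := exists_greatest_lt hw hwb'
  refine ⟨w', hw', b', hb', hw'b', fun z hz ⟨h₁, h₂⟩ => ?_⟩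
  rcases mem_union.1 hz with hz | hz
  · exact (hw'max z hz h₂).not_gt h₁
  · exact (hb'min z hz (hww'.trans_lt h₁)).not_gt h₂

theorem exists_isNoncrossingMatching_s19 (hd : Disjoint W B) (hcard : W.card = B.card) :
    ∃ M, IsNoncrossingMatching_s19 W B M := by
  induction hn : B.card generalizing W B with
  | zero =>
    rw [card_eq_zero] at hn
    subst hn
    rw [card_empty, card_eq_zero] at hcard
    subst hcard
    exact ⟨∅, by constructor <;> simp⟩
  | succ n ih =>
    have extend : ∀ w ∈ W, ∀ b ∈ B, ∀ {u v}, u < v → (u = w ∧ v = b) ∨ (u = b ∧ v = w) →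
        (∀ z ∈ W ∪ B, ¬(u < z ∧ z < v)) → ∃ M, IsNoncrossingMatching_s19 W B M := by
      intro w hw b hb u v huv hpair hgap
      obtain ⟨M, hM⟩ := ih (hd.mono (erase_subset w W) (erase_subset b B))
        (by rw [card_erase_of_mem hw, card_erase_of_mem hb, hcard]) (by simp [hb, hn])
      exact ⟨_, (hM.insert_of_erase hd hw hb huv hpair hgap).1⟩
    obtain ⟨b, hb⟩ := card_pos.1 (by omega : 0 < B.card)
    obtain ⟨w, hw⟩ := card_pos.1 (by omega : 0 < W.card)
    rcases lt_or_gt_of_ne (fun h : w = b => disjoint_left.1 hd hw (h ▸ hb)) with hwb | hbw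
    · obtain ⟨w', hw', b', hb', hlt, hgap⟩ := exists_adjacent_of_lt hw hb hwb
      exact extend w' hw' b' hb' hlt (.inl ⟨rfl, rfl⟩) hgap
    · obtain ⟨b', hb', w', hw', hlt, hgap⟩ := exists_adjacent_of_lt hb hw hbw
      exact extend w' hw' b' hb' hlt (.inr ⟨rfl, rfl⟩) (by rwa [union_comm])

theorem strictMonoOn_swap {s : Finset α} {x y : α} (hx : x ∉ s)
    (hxy : ∀ z ∈ s, z ≠ y → (z < x ↔ z < y)) : StrictMonoOn (Equiv.swap x y) ↑s := by
  have hne : ∀ z ∈ s, z ≠ x := fun z hz h => hx (h ▸ hz)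
  intro a ha b hb hab
  by_cases hay : a = y <;> by_cases hby : b = y
  · exact absurd (hay.trans hby.symm) hab.ne
  · subst hay
    rw [Equiv.swap_apply_right, Equiv.swap_apply_of_ne_of_ne (hne b hb) hby]
    exact lt_of_le_of_ne (not_lt.1 fun h => lt_asymm hab ((hxy b hb hby).1 h)) (hne b hb).symm
  · subst hby
    rw [Equiv.swap_apply_right, Equiv.swap_apply_of_ne_of_ne (hne a ha) hay]
    exact (hxy a ha hay).2 hab
  · rwa [Equiv.swap_apply_of_ne_of_ne (hne a ha) hay, Equiv.swap_apply_of_ne_of_ne (hne b hb) hby]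

theorem arcZetaVaries_of_consecutive (hd : Disjoint W B) (hcard : W.card = B.card)
    {w₁ b w₂ : α} (hw₁ : w₁ ∈ W) (hb : b ∈ B) (hw₂ : w₂ ∈ W) (h₁ : w₁ < b) (h₂ : b < w₂)
    (hgap : ∀ z ∈ W ∪ B, w₁ < z → z < w₂ → z = b) : ArcZetaVaries W B := by
  have hbW : b ∉ W := disjoint_right.1 hd hb
  have hw₁B : w₁ ∉ B := disjoint_left.1 hd hw₁
  have hw₂B : w₂ ∉ B := disjoint_left.1 hd hw₂
  obtain ⟨Φ, hΦ⟩ := exists_isNoncrossingMatching_s19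
    (hd.mono (erase_subset w₁ W) (erase_subset b B))
    (by rw [card_erase_of_mem hw₁, card_erase_of_mem hb, hcard])
  -- Once `w₁` and `b` are removed, `w₂` can slide down to `w₁` without passing any other point.
  set σ := Equiv.swap w₁ w₂
  have hσ : StrictMonoOn σ ↑(W.erase w₁ ∪ B.erase b) := by
    refine strictMonoOn_swap (by simp [hw₁B]) fun z hz hzw₂ =>
      ⟨fun h => h.trans (h₁.trans h₂), fun h => lt_of_not_ge fun hw₁z => ?_⟩
    have hzw₁ : z ≠ w₁ := by rintro rfl; simp [hw₁B] at hz
    have hzb : z ≠ b := by rintro rfl; simp [hbW] at hz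
    exact hzb (hgap z (union_subset_union (erase_subset _ _) (erase_subset _ _) hz)
      (lt_of_le_of_ne hw₁z hzw₁.symm) h)
  have hσW : (W.erase w₁).map σ.toEmbedding = W.erase w₂ := by
    ext z
    simp only [σ, mem_map_equiv, Equiv.symm_swap, mem_erase, Equiv.swap_apply_def]
    grind
  have hσB : (B.erase b).map σ.toEmbedding = B.erase b := by
    ext z
    simp only [σ, mem_map_equiv, Equiv.symm_swap, mem_erase, Equiv.swap_apply_def]
    grind
  have hΦ' := hΦ.map σ.toEmbedding hσ
  have hζ := arcZeta_map σ.toEmbedding (W.erase w₁) Φ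
  rw [hσW, hσB] at hΦ'
  rw [hσW] at hζ
  obtain ⟨hM, hζM⟩ := hΦ.insert_of_erase hd hw₁ hb h₁ (.inl ⟨rfl, rfl⟩)
    fun z hz h => (hgap z hz h.1 (h.2.trans h₂) ▸ h.2).false
  obtain ⟨hM', hζM'⟩ := hΦ'.insert_of_erase hd hw₂ hb h₂ (.inr ⟨rfl, rfl⟩)
    fun z hz h => (hgap z hz (h₁.trans h.1) h.2 ▸ h.1).false
  refine ⟨_, _, hM, hM', ?_⟩
  rw [hζM, hζM', ← hζ, if_neg h₁.ne', if_pos rfl]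
  omega

/-- Read upwards, the points begin with whites up to `w₀`, then the first run `[u, u']` of
blacks, then the white `v`. -/
theorem exists_first_black_run (hd : Disjoint W B) (hfirst : ∃ w ∈ W, ∀ b ∈ B, w < b)
    (hBW : Surrounds B W) :
    ∃ w₀ ∈ W, ∃ u ∈ B, ∃ u' ∈ B, ∃ v ∈ W, w₀ < u ∧ u ≤ u' ∧ u' < v ∧
      (∀ z ∈ W, ¬(w₀ < z ∧ z < v)) ∧ ∀ z ∈ B, u ≤ z ∧ (z < v → z ≤ u') := by
  obtain ⟨w, hw, hwB⟩ := hfirst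
  obtain ⟨b, hb, ω, hω, -, -, hbω, -⟩ := hBW
  have hBne : B.Nonempty := ⟨b, hb⟩
  have hu := B.min'_mem hBne
  obtain ⟨w₀, hw₀, hw₀u, -, hw₀max⟩ := exists_greatest_lt hw (hwB _ hu)
  obtain ⟨v, hv, huv, -, hvmin⟩ := exists_least_gt hω ((B.min'_le b hb).trans_lt hbω)
  obtain ⟨u', hu', hu'v, huu', hu'max⟩ := exists_greatest_lt hu huv
  refine ⟨w₀, hw₀, _, hu, u', hu', v, hv, hw₀u, huu', hu'v, fun z hz ⟨h₁, h₂⟩ => ?_,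
    fun z hz => ⟨B.min'_le z hz, hu'max z hz⟩⟩
  rcases lt_or_ge z (B.min' hBne) with hzu | huz
  · exact (hw₀max z hz hzu).not_gt h₁
  · exact (hvmin z hz (lt_of_le_of_ne huz fun h => disjoint_left.1 hd hz (h ▸ hu))).not_gt h₂

theorem arcZetaVaries_of_white_first (hd : Disjoint W B) (hcard : W.card = B.card)
    (hfirst : ∃ w ∈ W, ∀ b ∈ B, w < b) (hBW : Surrounds B W)
    (ih : ∀ W' B' : Finset α, B'.card < B.card → Disjoint W' B' → W'.card = B'.card →
      Surrounds W' B' → Surrounds B' W' → ArcZetaVaries W' B') : ArcZetaVaries W B := by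
  obtain ⟨w₀, hw₀, u, hu, u', hu', v, hv, hw₀u, huu', hu'v, hnoW, hB⟩ :=
    exists_first_black_run hd hfirst hBW
  have hW : ∀ z ∈ W, u < z → v ≤ z := fun z hz huz =>
    not_lt.1 fun hzv => hnoW z hz ⟨hw₀u.trans huz, hzv⟩
  -- Either `w₀ u v` are consecutive; or some white `ω > v` is followed by a black, and then
  -- both patterns survive the removal of the adjacent pair `u' v`; or `u' v c` are consecutive,
  -- `c` being the first black above `v`.
  rcases huu'.lt_or_eq with huu' | rfl
  · by_cases hmore : ∃ ω ∈ W, v < ω ∧ ∃ b ∈ B, ω < b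
    · obtain ⟨ω, hω, hvω, b, hb, hωb⟩ := hmore
      have huω : u < ω := huu'.trans (hu'v.trans hvω)
      have hWB' : Surrounds (W.erase v) (B.erase u') :=
        ⟨w₀, mem_erase.2 ⟨(hw₀u.trans (huu'.trans hu'v)).ne, hw₀⟩, u, mem_erase.2 ⟨huu'.ne, hu⟩,
          ω, mem_erase.2 ⟨hvω.ne', hω⟩, hw₀u, huω⟩
      have hBW' : Surrounds (B.erase u') (W.erase v) :=
        ⟨u, mem_erase.2 ⟨huu'.ne, hu⟩, ω, mem_erase.2 ⟨hvω.ne', hω⟩,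
          b, mem_erase.2 ⟨(hu'v.trans (hvω.trans hωb)).ne', hb⟩, huω, hωb⟩
      refine ArcZetaVaries.of_erase hd hv hu' hu'v (.inr ⟨rfl, rfl⟩) (fun z hz h => ?_) <|
        ih _ _ (card_erase_lt_of_mem hu') (hd.mono (erase_subset _ _) (erase_subset _ _))
          (by rw [card_erase_of_mem hv, card_erase_of_mem hu', hcard]) hWB' hBW'
      rcases mem_union.1 hz with hzW | hzB
      · exact (hW z hzW (huu'.trans h.1)).not_gt h.2
      · exact ((hB z hzB).2 h.2).not_gt h.1
    · push Not at hmore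
      obtain ⟨b₁, hb₁, ω, hω, b₂, hb₂, hb₁ω, hωb₂⟩ := hBW
      have hvb₂ : v < b₂ := (hW ω hω ((hB b₁ hb₁).1.trans_lt hb₁ω)).trans_lt hωb₂
      obtain ⟨c, hc, hvc, -, hcmin⟩ := exists_least_gt hb₂ hvb₂
      refine (arcZetaVaries_of_consecutive hd.symm hcard.symm hu' hv hc hu'v hvc
        fun z hz h₁ h₂ => ?_).symm hd.symm
      rcases mem_union.1 hz with hzB | hzW
      · exfalso
        rcases lt_or_ge z v with hzv | hvz
        · exact ((hB z hzB).2 hzv).not_gt h₁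
        · exact (hcmin z hzB (lt_of_le_of_ne hvz fun h => disjoint_left.1 hd hv (h ▸ hzB))).not_gt
            h₂
      · exact le_antisymm (not_lt.1 fun hvz => (hmore z hzW hvz c hc).not_gt h₂)
          (hW z hzW (huu'.trans h₁))
  · exact arcZetaVaries_of_consecutive hd hcard hw₀ hu hv hw₀u hu'v fun z hz h₁ h₂ =>
      (mem_union.1 hz).elim (fun hzW => (hnoW z hzW ⟨h₁, h₂⟩).elim)
        fun hzB => le_antisymm ((hB z hzB).2 h₂) (hB z hzB).1

theorem arcZetaVaries_of_surrounds (hd : Disjoint W B) (hcard : W.card = B.card)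
    (hWB : Surrounds W B) (hBW : Surrounds B W) : ArcZetaVaries W B := by
  induction hn : B.card using Nat.strong_induction_on generalizing W B with
  | _ n ih =>
  wlog hfirst : ∃ w ∈ W, ∀ b ∈ B, w < b generalizing W B
  · refine (this hd.symm hcard.symm hBW hWB (hcard ▸ hn) ?_).symm hd.symm
    obtain ⟨-, -, b, hb, -⟩ := hWB
    refine ⟨B.min' ⟨b, hb⟩, min'_mem _ _, fun w hw => ?_⟩
    push Not at hfirst
    obtain ⟨b', hb', hb'w⟩ := hfirst w hw
    exact (min'_le _ _ hb').trans_lt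
      (lt_of_le_of_ne hb'w fun h => disjoint_left.1 hd hw (h ▸ hb'))
  exact arcZetaVaries_of_white_first hd hcard hfirst hBW fun W' B' hlt hd' hcard' hWB' hBW' =>
    ih _ (hn ▸ hlt) hd' hcard' hWB' hBW' rfl

end NoncrossingMatching

/-- `Elt` already carries the componentwise order of a sum type; `cLT` is the lexicographic
order of `ℕ ⊕ ℕᵒᵈ`, pulled back along `cLex`. -/
def cLex : Elt ≃ Lex (ℕ ⊕ ℕᵒᵈ) := (Equiv.sumCongr (Equiv.refl ℕ) OrderDual.toDual).trans toLex

theorem cLT_iff_cLex_lt (a b : Elt) : cLT a b ↔ cLex a < cLex b := by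
  rcases a with a | a <;> rcases b with b | b <;> simp [cLT, cLex]

theorem cLex_inr_strictAnti : StrictAnti (fun j => cLex (Sum.inr j)) := fun a b h => by
  simpa [cLex] using h

theorem cLex_inl_lt_inr (i j : ℕ) : cLex (Sum.inl i) < cLex (Sum.inr j) := by
  simp [cLex]

namespace Cortege

variable {m n : ℕ} (S : Cortege m n)

/-- Rows change colour while columns keep theirs: a feasible matching is then a noncrossing
matching in which every couple joins the two new colours. -/
def recoloredWhites : Finset Elt := S.whites.filter (·.isRight) ∪ S.blacks.filter (·.isLeft)

def recoloredBlacks : Finset Elt := S.blacks.filter (·.isRight) ∪ S.whites.filter (·.isLeft)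

theorem disjoint_whites_blacks_s19 : Disjoint S.whites S.blacks := by
  simp only [whites, blacks, disjoint_left, mem_union, mem_image, mem_sdiff]
  grind

theorem disjoint_recoloredWhites_recoloredBlacks :
    Disjoint S.recoloredWhites S.recoloredBlacks := by
  have := S.disjoint_whites_blacks_s19
  simp only [recoloredWhites, recoloredBlacks, disjoint_left, mem_union, mem_filter] at this ⊢
  grind

theorem recoloredWhites_union_recoloredBlacks :
    S.recoloredWhites ∪ S.recoloredBlacks = S.ground := by
  ext a
  simp only [recoloredWhites, recoloredBlacks, ground, mem_union, mem_filter]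
  cases a <;> simp [or_comm]

theorem recoloredWhites_eq :
    S.recoloredWhites = (S.J \ S.J').image Sum.inr ∪ (S.I' \ S.I).image Sum.inl := by
  ext a; cases a <;> simp [recoloredWhites, whites, blacks]

theorem recoloredBlacks_eq :
    S.recoloredBlacks = (S.J' \ S.J).image Sum.inr ∪ (S.I \ S.I').image Sum.inl := by
  ext a; cases a <;> simp [recoloredBlacks, whites, blacks]

theorem card_recoloredWhites_eq_card_recoloredBlacks :
    S.recoloredWhites.card = S.recoloredBlacks.card := by
  have hdisj (X Y : Finset ℕ) : Disjoint (X.image Sum.inr) (Y.image (Sum.inl (β := ℕ))) := by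
    simp [disjoint_left]
  rw [recoloredWhites_eq, recoloredBlacks_eq, card_union_of_disjoint (hdisj _ _),
    card_union_of_disjoint (hdisj _ _)]
  simp only [card_image_of_injective _ Sum.inr_injective,
    card_image_of_injective _ Sum.inl_injective]
  have := card_sdiff_add_card_inter S.I S.I'
  have := card_sdiff_add_card_inter S.I' S.I
  have := card_sdiff_add_card_inter S.J S.J'
  have := card_sdiff_add_card_inter S.J' S.J
  rw [inter_comm S.I' S.I, inter_comm S.J' S.J] at *
  have := S.hIJ
  have := S.hI'J'
  omega

theorem isFeasible_of_isNoncrossingMatching {M : Finset (Elt × Elt)}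
    (h : IsNoncrossingMatching_s19 (S.recoloredWhites.map cLex.toEmbedding)
      (S.recoloredBlacks.map cLex.toEmbedding) (M.map (cLex.prodCongr cLex).toEmbedding)) :
    IsFeasible S M := by
  set E := (cLex.prodCongr cLex).toEmbedding
  have hE (p : Elt × Elt) : E p = (cLex p.1, cLex p.2) := rfl
  have hcol : ∀ p ∈ M, (p.1 ∈ S.recoloredWhites ∧ p.2 ∈ S.recoloredBlacks) ∨
      (p.1 ∈ S.recoloredBlacks ∧ p.2 ∈ S.recoloredWhites) :=
    fun p hp => by simpa [hE] using h.bicolored _ (mem_map_of_mem E hp)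
  have hcommon : ∀ p ∈ M, ∀ q ∈ M, ∀ y, (p.1 = y ∨ p.2 = y) → (q.1 = y ∨ q.2 = y) → p = q :=
    fun p hp q hq y hpy hqy => E.injective <| h.eq_of_common_end _ (mem_map_of_mem E hp) _
      (mem_map_of_mem E hq) (cLex y) (hpy.imp (congrArg cLex) (congrArg cLex))
      (hqy.imp (congrArg cLex) (congrArg cLex))
  refine ⟨fun p hp => ?_, fun y hy => ?_, fun p hp => ?_, fun p hp q hq => ?_⟩
  · rw [← recoloredWhites_union_recoloredBlacks, cLT_iff_cLex_lt]
    refine ⟨?_, ?_, h.lt _ (mem_map_of_mem E hp)⟩ <;> rcases hcol p hp with h | h <;> simp [h]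
  · have : cLex y ∈ S.recoloredWhites.map cLex.toEmbedding ∪
        S.recoloredBlacks.map cLex.toEmbedding := by
      rw [← map_union, recoloredWhites_union_recoloredBlacks]
      exact mem_map_of_mem _ hy
    obtain ⟨q, hq, hqy⟩ := h.covers _ this
    obtain ⟨p, hp, rfl⟩ := mem_map.1 hq
    have hpy : p.1 = y ∨ p.2 = y := hqy.imp (cLex.injective ·) (cLex.injective ·)
    exact ⟨p, ⟨hp, hpy⟩, fun q ⟨hq, hqy⟩ => hcommon q hq p hp y hqy hpy⟩
  · obtain ⟨a, b⟩ := p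
    have hab := hcol _ hp
    have ha : a ∈ S.whites → a ∉ S.blacks := fun h => disjoint_left.1 S.disjoint_whites_blacks_s19 h
    have hb : b ∈ S.whites → b ∉ S.blacks := fun h => disjoint_left.1 S.disjoint_whites_blacks_s19 h
    rcases a with a | a <;> rcases b with b | b <;>
      simp [recoloredWhites, recoloredBlacks, sameSide] at hab ⊢ <;> tauto
  · rw [cLT_iff_cLex_lt, cLT_iff_cLex_lt, cLT_iff_cLex_lt]
    exact h.noncrossing _ (mem_map_of_mem E hp) _ (mem_map_of_mem E hq)

theorem zetaWhite_sub_zetaBlack {M : Finset (Elt × Elt)} (hM : IsFeasible S M) :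
    (zetaWhite S M : ℤ) - zetaBlack S M = arcZeta S.recoloredWhites M -
      ∑ y ∈ S.ground, if y.isLeft then (if y ∈ S.whites then 1 else -1) else 0 := by
  set r : Elt → ℤ := fun y => if y.isLeft then (if y ∈ S.whites then 1 else -1) else 0
  have hrows := sum_fst_add_snd_eq_sum r (fun p hp => ⟨(hM.1 p hp).1, (hM.1 p hp).2.1,
    fun h => ((cLT_iff_cLex_lt _ _).1 (hM.1 p hp).2.2).ne (congrArg cLex h)⟩) hM.2.1
  -- `ζ` sees a row–row couple at its left end, a column–column couple at its right end and a
  -- row–column couple not at all; the row terms `r` make up the difference.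
  have hcouple : ∀ p ∈ M, (if p.2 ∈ S.recoloredWhites then (1 : ℤ) else -1) =
      ((if sameSide p.1 p.2 ∧ numMin p ∈ S.whites then 1 else 0) -
        (if sameSide p.1 p.2 ∧ numMin p ∈ S.blacks then 1 else 0)) + (r p.1 + r p.2) := by
    intro p hp
    obtain ⟨ha, hb, hlt⟩ := hM.1 p hp
    have hcol := hM.2.2.1 p hp
    have hW : ∀ x ∈ S.whites, x ∉ S.blacks := fun _ hx => disjoint_left.1 S.disjoint_whites_blacks_s19 hx
    have hB : ∀ x ∈ S.blacks, x ∉ S.whites := fun _ hx => disjoint_right.1 S.disjoint_whites_blacks_s19 hx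
    obtain ⟨a, b⟩ := p
    rw [ground, mem_union] at ha hb
    rcases a with a | a <;> rcases b with b | b <;> simp only [cLT] at hlt <;>
      rcases ha with ha | ha <;> rcases hb with hb | hb <;>
      simp [numMin, sameSide, recoloredWhites, r, ha, hb, hW, hB, hlt, le_of_lt, not_le_of_gt]
        at hcol ⊢
  rw [zetaWhite, zetaBlack, natCast_card_filter, natCast_card_filter, arcZeta,
    sum_congr rfl hcouple, sum_add_distrib, hrows, sum_sub_distrib]
  ring

theorem exists_zeta_ne_of_surrounds
    (hWB : Surrounds (S.recoloredWhites.map cLex.toEmbedding)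
      (S.recoloredBlacks.map cLex.toEmbedding))
    (hBW : Surrounds (S.recoloredBlacks.map cLex.toEmbedding)
      (S.recoloredWhites.map cLex.toEmbedding)) :
    ∃ M M' : Finset (Elt × Elt), IsFeasible S M ∧ IsFeasible S M' ∧
      (zetaWhite S M : ℤ) - zetaBlack S M ≠ (zetaWhite S M' : ℤ) - zetaBlack S M' := by
  obtain ⟨Φ, Φ', hΦ, hΦ', hne⟩ := arcZetaVaries_of_surrounds
    ((disjoint_map _).2 S.disjoint_recoloredWhites_recoloredBlacks)
    (by simpa using S.card_recoloredWhites_eq_card_recoloredBlacks) hWB hBW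
  obtain ⟨M, rfl⟩ := (cLex.prodCongr cLex).finsetCongr.surjective Φ
  obtain ⟨M', rfl⟩ := (cLex.prodCongr cLex).finsetCongr.surjective Φ'
  have hM := S.isFeasible_of_isNoncrossingMatching hΦ
  have hM' := S.isFeasible_of_isNoncrossingMatching hΦ'
  refine ⟨M, M', hM, hM', ?_⟩
  rw [S.zetaWhite_sub_zetaBlack hM, S.zetaWhite_sub_zetaBlack hM', ← arcZeta_map cLex.toEmbedding,
    ← arcZeta_map cLex.toEmbedding]
  exact fun h => hne (sub_left_injective h)

theorem mem_recoloredWhites_map_inr {j : ℕ} (hj : j ∈ S.J \ S.J') :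
    cLex (.inr j) ∈ S.recoloredWhites.map cLex.toEmbedding := by
  simpa [recoloredWhites_eq] using hj

theorem mem_recoloredBlacks_map_inr {j : ℕ} (hj : j ∈ S.J' \ S.J) :
    cLex (.inr j) ∈ S.recoloredBlacks.map cLex.toEmbedding := by
  simpa [recoloredBlacks_eq] using hj

theorem mem_recoloredBlacks_map_inl {i : ℕ} (hi : i ∈ S.I \ S.I') :
    cLex (.inl i) ∈ S.recoloredBlacks.map cLex.toEmbedding := by
  simpa [recoloredBlacks_eq] using hi

end Cortege

theorem surrounds_sdiff_of_not_wShalf {I J : Finset ℕ} (hJI : J.card ≤ I.card)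
    (h : ¬WShalf I J) : Surrounds (I \ J) (J \ I) := by
  by_contra hs
  refine h ⟨hJI, (J \ I).filter (fun x => ∀ y ∈ I \ J, x < y),
    (J \ I).filter (fun x => ¬∀ y ∈ I \ J, x < y), disjoint_filter_filter_not _ _ _,
    filter_union_filter_not_eq _ _, fun x hx y hy => (mem_filter.1 hx).2 y hy,
    fun y hy x hx => ?_⟩
  obtain ⟨hx, hnx⟩ := mem_filter.1 hx
  push Not at hnx
  obtain ⟨y₀, hy₀, hy₀x⟩ := hnx
  have hne : ∀ z ∈ I \ J, z ≠ x := fun z hz =>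
    ne_of_mem_of_not_mem (mem_sdiff.1 hz).1 (mem_sdiff.1 hx).2
  exact lt_of_not_ge fun hxy => hs ⟨y₀, hy₀, x, hx, y, hy, lt_of_le_of_ne hy₀x (hne y₀ hy₀),
    lt_of_le_of_ne hxy (hne y hy).symm⟩

/-- If `I, J` are not weakly separated, the flag cortege `(A|I, B|J)` admits two
feasible matchings with different values of `ζ° - ζ•`. -/
theorem exists_two_matchings_of_not_weaklySeparated
    {m n : ℕ} (I J : Finset ℕ)
    (hIn : I ⊆ Finset.Icc 1 n) (hJn : J ⊆ Finset.Icc 1 n)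
    (hJI : J.card ≤ I.card) (hws : ¬ WeaklySeparated I J) (hm : I.card ≤ m) :
    ∃ M M' : Finset (Elt × Elt),
      IsFeasible (flagCortege m n I J hIn hJn hJI hm) M ∧
      IsFeasible (flagCortege m n I J hIn hJn hJI hm) M' ∧
      (zetaWhite (flagCortege m n I J hIn hJn hJI hm) M : ℤ) -
          (zetaBlack (flagCortege m n I J hIn hJn hJI hm) M : ℤ) ≠
        (zetaWhite (flagCortege m n I J hIn hJn hJI hm) M' : ℤ) -
          (zetaBlack (flagCortege m n I J hIn hJn hJI hm) M' : ℤ) := by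
  set S := flagCortege m n I J hIn hJn hJI hm
  obtain ⟨a, ha, b, hb, c, hc, hab, hbc⟩ := surrounds_sdiff_of_not_wShalf hJI (hws ∘ Or.inl)
  refine S.exists_zeta_ne_of_surrounds ⟨_, S.mem_recoloredWhites_map_inr hc, _,
    S.mem_recoloredBlacks_map_inr hb, _, S.mem_recoloredWhites_map_inr ha,
    cLex_inr_strictAnti hbc, cLex_inr_strictAnti hab⟩ ?_
  rcases hJI.lt_or_eq with hlt | heq
  · -- a row of `A \ B` (black after recolouring) lies below the pattern `c > b` of columns
    have hrow : I.card ∈ S.I \ S.I' := by simp only [S, flagCortege, mem_sdiff, mem_Icc]; omega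
    exact ⟨_, S.mem_recoloredBlacks_map_inl hrow, _, S.mem_recoloredWhites_map_inr hc, _,
      S.mem_recoloredBlacks_map_inr hb, cLex_inl_lt_inr _ _, cLex_inr_strictAnti hbc⟩
  · exact (surrounds_sdiff_of_not_wShalf heq.ge (hws ∘ Or.inr)).of_strictAnti
      cLex_inr_strictAnti (fun _ => S.mem_recoloredBlacks_map_inr)
      (fun _ => S.mem_recoloredWhites_map_inr)
end
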